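/- Define {x}_ξ = ξ^x − ξ^{−x} for ξ = e^{2πi/l}. For weights parametrized by α_1 = μ_1 − 2 + l, α_2 = 2μ_2 + 2 − 2l, the quantities S'(α, α') = ξ^{2α_1α'_1 + α_1α'_2 + α_2α'_1} {lα'_2}{α'_1}{α'_1+α'_2}/{α'_2} and d(α) = {α_2}/({lα_2}{α_1}{α_1+α_2}) satisfy the symmetry d(α') S'(α, α') = d(α) S'(α', α). -/

import Mathlib

/-! The normalisation {α'₂}/({lα'₂}{α'₁}{α'₁+α'₂}) in `d α'` cancels exactly the bracket factors
of `S' α α'`, so `d α' * S' α α'` is the pure phase `ξ^(2α₁α'₁ + α₁α'₂ + α₂α'₁)`, whose exponent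
is a symmetric bilinear form in `α` and `α'`. -/

theorem div_mul_mul_div_cancel_of_ne_zero {K : Type*} [Field K] {x y D : K} (hD : D ≠ 0)
    (hy : y ≠ 0) : y / D * (x * D / y) = x := by
  field_simp

theorem stmt13_general (l : ℕ) (μ1 μ2 μ1' μ2' : ℂ) :
    let br : ℂ → ℂ := fun x =>
      Complex.exp (2 * Real.pi * Complex.I * x / l) -
        Complex.exp (2 * Real.pi * Complex.I * (-x) / l)
    let e : ℂ → ℂ := fun x => Complex.exp (2 * Real.pi * Complex.I * x / l)
    let α1 : ℂ := μ1 - 2 + l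
    let α2 : ℂ := 2 * μ2 + 2 - 2 * l
    let β1 : ℂ := μ1' - 2 + l
    let β2 : ℂ := 2 * μ2' + 2 - 2 * l
    let S' : (ℂ × ℂ) → (ℂ × ℂ) → ℂ := fun a a' =>
      e (2 * a.1 * a'.1 + a.1 * a'.2 + a.2 * a'.1) *
        (br (l * a'.2) * br a'.1 * br (a'.1 + a'.2)) / br a'.2
    let d : (ℂ × ℂ) → ℂ := fun a =>
      br a.2 / (br (l * a.2) * br a.1 * br (a.1 + a.2))
    br α2 ≠ 0 → br β2 ≠ 0 → br (l * α2) ≠ 0 → br (l * β2) ≠ 0 →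
      br α1 ≠ 0 → br β1 ≠ 0 → br (α1 + α2) ≠ 0 → br (β1 + β2) ≠ 0 →
      d (β1, β2) * S' (α1, α2) (β1, β2) = d (α1, α2) * S' (β1, β2) (α1, α2) := by
  intro br e α1 α2 β1 β2 S' d hα2 hβ2 hlα2 hlβ2 hα1 hβ1 hα12 hβ12
  have d_mul_S' : ∀ a a' : ℂ × ℂ, br a'.2 ≠ 0 →
      br (l * a'.2) * br a'.1 * br (a'.1 + a'.2) ≠ 0 →
      d a' * S' a a' = e (2 * a.1 * a'.1 + a.1 * a'.2 + a.2 * a'.1) := by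
    intro a a' hnum hden
    exact div_mul_mul_div_cancel_of_ne_zero hden hnum
  rw [d_mul_S' (α1, α2) (β1, β2) hβ2 (mul_ne_zero (mul_ne_zero hlβ2 hβ1) hβ12),
    d_mul_S' (β1, β2) (α1, α2) hα2 (mul_ne_zero (mul_ne_zero hlα2 hα1) hα12)]
  congr 1
  ring

theorem stmt13 (l : ℕ) (hodd : Odd l) (hl : 3 ≤ l) (μ1 μ2 μ1' μ2' : ℂ) :
    let br : ℂ → ℂ := fun x =>
      Complex.exp (2 * Real.pi * Complex.I * x / l) -
        Complex.exp (2 * Real.pi * Complex.I * (-x) / l)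
    let e : ℂ → ℂ := fun x => Complex.exp (2 * Real.pi * Complex.I * x / l)
    let α1 : ℂ := μ1 - 2 + l
    let α2 : ℂ := 2 * μ2 + 2 - 2 * l
    let β1 : ℂ := μ1' - 2 + l
    let β2 : ℂ := 2 * μ2' + 2 - 2 * l
    let S' : (ℂ × ℂ) → (ℂ × ℂ) → ℂ := fun a a' =>
      e (2 * a.1 * a'.1 + a.1 * a'.2 + a.2 * a'.1) *
        (br (l * a'.2) * br a'.1 * br (a'.1 + a'.2)) / br a'.2
    let d : (ℂ × ℂ) → ℂ := fun a =>
      br a.2 / (br (l * a.2) * br a.1 * br (a.1 + a.2))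
    br α2 ≠ 0 → br β2 ≠ 0 → br (l * α2) ≠ 0 → br (l * β2) ≠ 0 →
      br α1 ≠ 0 → br β1 ≠ 0 → br (α1 + α2) ≠ 0 → br (β1 + β2) ≠ 0 →
      d (β1, β2) * S' (α1, α2) (β1, β2) = d (α1, α2) * S' (β1, β2) (α1, α2) :=
  stmt13_general l μ1 μ2 μ1' μ2'
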